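/- The unique quasi-stationary distribution of the number of 'yes' opinions in the 2-opinion discrete-time voter model on the complete graph K_n (n ≥ 3) is the uniform distribution on {1, 2, ..., n-1}, with corresponding eigenvalue λ = 1 - 2/(n(n-1)). -/

import Mathlib

/-!
Write `w k = k (n - k)`, so that `w k / (n (n - 1))` is the probability of each of the moves
`k → k ± 1`, and put `μ k = w k ν k`. The eigen-equation becomes the discrete Sturm–Liouville
equation `Δμ = n (n - 1) (λ - 1) ν`, while `Δw = -2`. By the Lagrange identity the Wronskian
`W k = w k μ (k + 1) - w (k + 1) μ k = w k w (k + 1) (ν (k + 1) - ν k)` grows by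
`(n (n - 1) (λ - 1) + 2) μ k` at each step. It vanishes at `0` and at `n - 1` because `w` vanishes
at `0` and `n`, and `∑ μ > 0`, so `λ = 1 - 2 / (n (n - 1))`; then `W` vanishes identically,
i.e. `ν` is constant on `{1, …, n - 1}`.
-/

open Finset

/-- Centred at `j + 1`, to avoid truncated subtraction. -/
def secondDiff (f : ℕ → ℝ) (j : ℕ) : ℝ := f (j + 2) - 2 * f (j + 1) + f j

def discreteWronskian (f g : ℕ → ℝ) (k : ℕ) : ℝ := f k * g (k + 1) - f (k + 1) * g k

theorem discreteWronskian_succ_sub (f g : ℕ → ℝ) (j : ℕ) :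
    discreteWronskian f g (j + 1) - discreteWronskian f g j =
      f (j + 1) * secondDiff g j - g (j + 1) * secondDiff f j := by
  unfold discreteWronskian secondDiff
  ring

theorem discreteWronskian_mul_right (f g : ℕ → ℝ) (k : ℕ) :
    discreteWronskian f (fun i => f i * g i) k = f k * f (k + 1) * (g (k + 1) - g k) := by
  unfold discreteWronskian
  ring

namespace VoterModel

def weight (n k : ℕ) : ℝ := k * ((n : ℝ) - k)

theorem weight_zero (n : ℕ) : weight n 0 = 0 := by simp [weight]

theorem weight_self (n : ℕ) : weight n n = 0 := by simp [weight]

theorem one_le_weight {n k : ℕ} (hk : 1 ≤ k) (hkn : k + 1 ≤ n) : 1 ≤ weight n k := by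
  have hk' : (1 : ℝ) ≤ k := by exact_mod_cast hk
  have hkn' : (k : ℝ) + 1 ≤ n := by exact_mod_cast hkn
  unfold weight
  nlinarith

theorem secondDiff_weight (n j : ℕ) : secondDiff (weight n) j = -2 := by
  unfold secondDiff weight
  push_cast
  ring

section SturmLiouville

variable {n : ℕ} {ν : ℕ → ℝ} {e : ℝ}
  (hΔ : ∀ j, j + 2 ≤ n → secondDiff (fun k => weight n k * ν k) j = e * ν (j + 1))
include hΔ

theorem discreteWronskian_weight_eq_sum :
    ∀ j, j + 1 ≤ n → discreteWronskian (weight n) (fun k => weight n k * ν k) j =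
      (e + 2) * ∑ k ∈ Icc 1 j, weight n k * ν k := by
  intro j hj
  induction j with
  | zero => simp [discreteWronskian, weight_zero]
  | succ j ih =>
    have hstep := discreteWronskian_succ_sub (weight n) (fun k => weight n k * ν k) j
    rw [hΔ j hj, secondDiff_weight, ih (by omega)] at hstep
    rw [sum_Icc_succ_top (by omega)]
    linear_combination hstep

theorem eigenvalue_eq_neg_two (hν0 : ∀ k, 0 ≤ ν k) (hsum : ∑ k ∈ Icc 1 (n - 1), ν k = 1)
    (hn : 1 ≤ n) : e = -2 := by
  have hW := discreteWronskian_weight_eq_sum hΔ (n - 1) (by omega)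
  rw [discreteWronskian_mul_right, Nat.sub_add_cancel hn, weight_self] at hW
  have hmass : 1 ≤ ∑ k ∈ Icc 1 (n - 1), weight n k * ν k :=
    hsum ▸ sum_le_sum fun k hk => by
      rw [mem_Icc] at hk
      nlinarith [one_le_weight (n := n) hk.1 (by omega), hν0 k]
  have hzero : (e + 2) * ∑ k ∈ Icc 1 (n - 1), weight n k * ν k = 0 := by linarith
  linarith [(mul_eq_zero.mp hzero).resolve_right (by linarith)]

theorem apply_succ_eq (he : e = -2) {j : ℕ} (hj : 1 ≤ j) (hjn : j + 2 ≤ n) :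
    ν (j + 1) = ν j := by
  have hW := discreteWronskian_weight_eq_sum hΔ j (by omega)
  rw [discreteWronskian_mul_right, he, neg_add_cancel, zero_mul] at hW
  have hpos : 0 < weight n j * weight n (j + 1) :=
    mul_pos (one_pos.trans_le (one_le_weight hj (by omega)))
      (one_pos.trans_le (one_le_weight (by omega) hjn))
  linarith [(mul_eq_zero.mp hW).resolve_left hpos.ne']

theorem apply_eq_apply_one (he : e = -2) {k : ℕ} (hk : k ∈ Icc 1 (n - 1)) : ν k = ν 1 := by
  rw [mem_Icc] at hk
  induction k, hk.1 using Nat.le_induction with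
  | base => rfl
  | succ j hj ih => rw [apply_succ_eq hΔ he hj (by omega), ih (by omega)]

end SturmLiouville

end VoterModel

open VoterModel in
theorem complete_graph_qsd_uniform (n : ℕ)
    (ν : ℕ → ℝ) (hν0 : ∀ k, 0 ≤ ν k)
    (hsum : ∑ k ∈ Finset.Icc 1 (n - 1), ν k = 1)
    (l : ℝ)
    (heig : ∀ k : ℕ, 1 ≤ k → k ≤ n - 1 →
      l * ν k = ν k * (((k : ℝ) * ((k : ℝ) - 1) + ((n : ℝ) - k) * ((n : ℝ) - k - 1))
          / ((n : ℝ) * ((n : ℝ) - 1)))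
        + ν (k + 1) * ((((k : ℝ) + 1) * ((n : ℝ) - k - 1)) / ((n : ℝ) * ((n : ℝ) - 1)))
        + ν (k - 1) * ((((n : ℝ) - k + 1) * ((k : ℝ) - 1)) / ((n : ℝ) * ((n : ℝ) - 1)))) :
    (∀ k : ℕ, 1 ≤ k → k ≤ n - 1 → ν k = 1 / ((n : ℝ) - 1)) ∧
    l = 1 - 2 / ((n : ℝ) * ((n : ℝ) - 1)) := by
  have hn : 2 ≤ n := by
    obtain ⟨k, hk⟩ := nonempty_of_sum_ne_zero (hsum ▸ one_ne_zero)
    rw [mem_Icc] at hk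
    omega
  have hn' : (2 : ℝ) ≤ n := by exact_mod_cast hn
  have hn1 : (n : ℝ) - 1 ≠ 0 := by linarith
  have hΔ : ∀ j, j + 2 ≤ n → secondDiff (fun k => weight n k * ν k) j =
      (n * (n - 1) * (l - 1)) * ν (j + 1) := by
    intro j hj
    have h := heig (j + 1) (by omega) (by omega)
    simp only [Nat.add_sub_cancel] at h
    field_simp at h
    unfold secondDiff weight
    push_cast at h ⊢
    linear_combination -h
  have he := eigenvalue_eq_neg_two hΔ hν0 hsum (by omega)
  have hν1 : ν 1 = 1 / ((n : ℝ) - 1) := by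
    rw [sum_congr rfl fun k hk => apply_eq_apply_one hΔ he hk, sum_const,
      Nat.card_Icc, Nat.add_sub_cancel, nsmul_eq_mul, Nat.cast_sub (by omega), Nat.cast_one] at hsum
    field_simp
    linarith
  refine ⟨fun k hk hkn => (apply_eq_apply_one hΔ he (mem_Icc.mpr ⟨hk, hkn⟩)).trans hν1,
    ?_⟩
  field_simp
  linarith
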